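/- Let φ ∈ S(ℝ²) and φ_t(y,z) = t^{-2}φ(y/t, z/t). Then for ρ ≥ 1 and all y, y', z with |y − y'| ≤ max(|y|,|z|)/2 and (y,z) ≠ (0,0), the ρ-variation regularity bound ‖{φ_t(y,z) − φ_t(y',z)}_{t>0}‖_{V_ρ} ≤ C |y − y'| (|y| + |z|)^{-3} holds, with C depending only on φ. -/

import Mathlib

open MeasureTheory Set ENNReal NNReal

/-- The ρ-variation norm of a family `a : ι → E` sampled along finite increasing
systems of indices lying in `S`. -/
noncomputable def varNorm {ι E : Type*} [Preorder ι] [SeminormedAddGroup E]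
    (ρ : ℝ) (S : Set ι) (a : ι → E) : ℝ≥0∞ :=
  ⨆ (n : ℕ) (t : Fin (n + 1) → ι) (_ : StrictMono t) (_ : ∀ i, t i ∈ S),
    (∑ i : Fin n, (‖a (t i.succ) - a (t i.castSucc)‖₊ : ℝ≥0∞) ^ ρ) ^ (1 / ρ)

/-!
Differentiating in `t`, `d/dt [t⁻ᵏ Φ(x/t)] = -t⁻ᵏ⁻¹ Θ(x/t)` with `Θ = k Φ + x·∇Φ`, again a
Schwartz function. Every point of the segment from `q/t` to `p/t` has norm at least `‖p‖/(2t)`,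
so the mean value theorem applied to `Θ` bounds the `t`-derivative of
`t⁻ᵏ (Φ(p/t) - Φ(q/t))` by `C ‖p - q‖ (t + ‖p‖/2)⁻ᵏ⁻²`, which is `-g'` for the decreasing
`g t = C ‖p - q‖ / ((k+1) (t + ‖p‖/2)ᵏ⁺¹)`. The increments of the family are therefore dominated
by those of `g`, and since `ρ ≥ 1` the `ρ`-variation is at most the `1`-variation, which telescopes
to at most `g 0 ≍ ‖p - q‖ / ‖p‖ᵏ⁺¹`. The theorem is the case `k = 2` on `ℝ × ℝ`, whose sup norm
satisfies `‖(y, z)‖ = max |y| |z| ≥ (|y| + |z|) / 2`.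
-/

theorem ENNReal.rpow_sum_rpow_le_sum {ι : Type*} (s : Finset ι) (f : ι → ℝ≥0∞) {p : ℝ}
    (hp : 1 ≤ p) : (∑ i ∈ s, f i ^ p) ^ (1 / p) ≤ ∑ i ∈ s, f i := by
  classical
  induction s using Finset.induction with
  | empty => simpa using zero_lt_one.trans_le hp
  | insert a s has ih =>
    rw [Finset.sum_insert has, Finset.sum_insert has]
    calc (f a ^ p + ∑ i ∈ s, f i ^ p) ^ (1 / p)
        = (f a ^ p + ((∑ i ∈ s, f i ^ p) ^ (1 / p)) ^ p) ^ (1 / p) := by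
          rw [← ENNReal.rpow_mul, one_div_mul_cancel (by positivity), ENNReal.rpow_one]
      _ ≤ f a + (∑ i ∈ s, f i ^ p) ^ (1 / p) := ENNReal.rpow_add_rpow_le_add _ _ hp
      _ ≤ f a + ∑ i ∈ s, f i := by gcongr

theorem Fin.sum_castSucc_sub_succ {G : Type*} [AddCommGroup G] {n : ℕ} (f : Fin (n + 1) → G) :
    ∑ i : Fin n, (f i.castSucc - f i.succ) = f 0 - f (Fin.last n) := by
  rw [Finset.sum_sub_distrib, sub_eq_sub_iff_add_eq_add, ← Fin.sum_univ_castSucc,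
    Fin.sum_univ_succ]

theorem varNorm_le_of_norm_sub_le {ι E : Type*} [Preorder ι] [SeminormedAddGroup E] {ρ : ℝ}
    (hρ : 1 ≤ ρ) {S : Set ι} {a : ι → E} {g : ι → ℝ} {B : ℝ}
    (ha : ∀ s ∈ S, ∀ t ∈ S, s ≤ t → ‖a t - a s‖ ≤ g s - g t)
    (hB : ∀ s ∈ S, ∀ t ∈ S, s ≤ t → g s - g t ≤ B) :
    varNorm ρ S a ≤ ENNReal.ofReal B := by
  refine iSup_le fun n => iSup_le fun t => iSup_le fun ht => iSup_le fun htS => ?_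
  have hstep (i : Fin n) : ‖a (t i.succ) - a (t i.castSucc)‖ ≤ g (t i.castSucc) - g (t i.succ) :=
    ha _ (htS _) _ (htS _) (ht.monotone Fin.castSucc_lt_succ.le)
  calc (∑ i : Fin n, (‖a (t i.succ) - a (t i.castSucc)‖₊ : ℝ≥0∞) ^ ρ) ^ (1 / ρ)
      ≤ ∑ i : Fin n, (‖a (t i.succ) - a (t i.castSucc)‖₊ : ℝ≥0∞) :=
        ENNReal.rpow_sum_rpow_le_sum _ _ hρ
    _ ≤ ∑ i : Fin n, ENNReal.ofReal (g (t i.castSucc) - g (t i.succ)) := by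
        gcongr with i
        rw [← ENNReal.ofReal_coe_nnreal, coe_nnnorm]
        exact ENNReal.ofReal_le_ofReal (hstep i)
    _ = ENNReal.ofReal (g (t 0) - g (t (Fin.last n))) := by
        rw [← ENNReal.ofReal_sum_of_nonneg fun i _ => (norm_nonneg _).trans (hstep i)]
        exact congrArg ENNReal.ofReal (Fin.sum_castSucc_sub_succ (g ∘ t))
    _ ≤ ENNReal.ofReal B :=
        ENNReal.ofReal_le_ofReal (hB _ (htS _) _ (htS _) (ht.monotone (Fin.zero_le _)))

theorem norm_sub_le_sub_of_norm_deriv_le {E : Type*} [NormedAddCommGroup E] [NormedSpace ℝ E]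
    {f f' : ℝ → E} {g g' : ℝ → ℝ} {a b : ℝ} (hab : a ≤ b)
    (hf : ∀ x ∈ Icc a b, HasDerivAt f (f' x) x) (hg : ∀ x ∈ Icc a b, HasDerivAt g (g' x) x)
    (bound : ∀ x ∈ Icc a b, ‖f' x‖ ≤ -g' x) : ‖f b - f a‖ ≤ g a - g b := by
  have hf_sub : ∀ x ∈ Icc a b, HasDerivAt (fun x => f x - f a) (f' x) x :=
    fun x hx => (hf x hx).sub_const _
  have hg_sub : ∀ x ∈ Icc a b, HasDerivAt (fun x => g a - g x) (-g' x) x :=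
    fun x hx => (hg x hx).const_sub _
  refine image_norm_le_of_norm_deriv_right_le_deriv_boundary'
    (fun x hx => (hf_sub x hx).continuousAt.continuousWithinAt)
    (fun x hx => (hf_sub x (Ico_subset_Icc_self hx)).hasDerivWithinAt)
    (by simp) (fun x hx => (hg_sub x hx).continuousAt.continuousWithinAt)
    (fun x hx => (hg_sub x (Ico_subset_Icc_self hx)).hasDerivWithinAt)
    (fun x hx => bound x (Ico_subset_Icc_self hx)) (right_mem_Icc.2 hab)

theorem hasDerivAt_div_mul_add_pow (c a : ℝ) (k : ℕ) {t : ℝ} (ht : t + a ≠ 0) :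
    HasDerivAt (fun s => c / ((k + 1) * (s + a) ^ (k + 1))) (-(c / (t + a) ^ (k + 2))) t := by
  have h := (((hasDerivAt_id t).add_const a).pow (k + 1)).const_mul ((k : ℝ) + 1)
  refine (h.inv (mul_ne_zero (by positivity) (pow_ne_zero _ ht))).const_mul c |>.congr_deriv ?_
  simp only [Pi.pow_apply, id, Nat.add_sub_cancel, Nat.cast_succ]
  field_simp
  ring

section Dilation

variable {E F : Type*} [NormedAddCommGroup E] [NormedSpace ℝ E]
  [NormedAddCommGroup F] [NormedSpace ℝ F]

namespace SchwartzMap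

/-- The Euler operator `k + x·∇`, generator of the dilations `t⁻ᵏ Φ(·/t)`. -/
noncomputable def euler (k : ℕ) (Φ : 𝓢(E, F)) : 𝓢(E, F) :=
  (k : ℝ) • Φ + bilinLeftCLM (ContinuousLinearMap.id ℝ (E →L[ℝ] F))
    (ContinuousLinearMap.id ℝ E).hasTemperateGrowth (fderivCLM ℝ E F Φ)

theorem euler_apply (k : ℕ) (Φ : 𝓢(E, F)) (x : E) :
    euler k Φ x = (k : ℝ) • Φ x + fderiv ℝ Φ x x :=
  rfl

theorem hasDerivAt_dilation (Φ : 𝓢(E, F)) (k : ℕ) (x : E) {t : ℝ} (ht : t ≠ 0) :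
    HasDerivAt (fun s : ℝ => (s ^ k)⁻¹ • Φ (s⁻¹ • x))
      (-(t ^ (k + 1))⁻¹ • euler k Φ (t⁻¹ • x)) t := by
  have hpow : HasDerivAt (fun s : ℝ => (s ^ k)⁻¹) (-k * (t ^ (k + 1))⁻¹) t := by
    have h := hasDerivAt_zpow (-(k : ℤ)) t (Or.inl ht)
    simp only [zpow_neg, zpow_natCast] at h
    refine h.congr_deriv ?_
    rw [show -(k : ℤ) - 1 = -((k + 1 : ℕ) : ℤ) by push_cast; ring, zpow_neg, zpow_natCast]
    push_cast
    ring
  have hinv : HasDerivAt (fun s : ℝ => s⁻¹ • x) (-(t ^ 2)⁻¹ • x) t :=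
    (hasDerivAt_inv ht).smul_const x
  refine (hpow.smul ((Φ.hasFDerivAt (t⁻¹ • x)).comp_hasDerivAt t hinv)).congr_deriv ?_
  rw [euler_apply, Function.comp_apply, ContinuousLinearMap.map_smul,
    ContinuousLinearMap.map_smul]
  module

theorem exists_one_add_pow_mul_norm_fderiv_le (f : 𝓢(E, F)) (m : ℕ) :
    ∃ C, 0 < C ∧ ∀ x, (1 + ‖x‖) ^ m * ‖fderiv ℝ f x‖ ≤ C := by
  refine ⟨2 ^ m * (Finset.Iic (m, 1)).sup (fun m => SchwartzMap.seminorm ℝ m.1 m.2) f + 1,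
    by positivity, fun x => ?_⟩
  rw [← norm_iteratedFDeriv_one]
  linarith [one_add_le_sup_seminorm_apply (𝕜 := ℝ) (m := (m, 1)) le_rfl le_rfl f x]

end SchwartzMap

theorem norm_sub_le_of_one_add_pow_mul_norm_fderiv_le {f : E → F} (hf : Differentiable ℝ f)
    {C : ℝ} {m : ℕ} (hC : ∀ w, (1 + ‖w‖) ^ m * ‖fderiv ℝ f w‖ ≤ C) {p q : E}
    (hpq : ‖p - q‖ ≤ ‖p‖ / 2) : ‖f p - f q‖ ≤ C / (1 + ‖p‖ / 2) ^ m * ‖p - q‖ := by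
  refine (convex_segment q p).norm_image_sub_le_of_norm_fderiv_le (fun w _ => hf w)
    (fun w hw => ?_) (left_mem_segment ℝ q p) (right_mem_segment ℝ q p)
  have hw : ‖p‖ / 2 ≤ ‖w‖ := by
    have := norm_sub_le_of_mem_segment (segment_symm ℝ q p ▸ hw)
    linarith [norm_sub_norm_le p w, norm_sub_rev p w, norm_sub_rev p q]
  rw [le_div_iff₀ (by positivity)]
  calc ‖fderiv ℝ f w‖ * (1 + ‖p‖ / 2) ^ m ≤ ‖fderiv ℝ f w‖ * (1 + ‖w‖) ^ m := by gcongr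
    _ ≤ C := by rw [mul_comm]; exact hC w

theorem norm_inv_pow_smul_sub_le {f : E → F} (hf : Differentiable ℝ f) {C : ℝ} {k : ℕ}
    (hC : ∀ w, (1 + ‖w‖) ^ (k + 2) * ‖fderiv ℝ f w‖ ≤ C) {p q : E} (hpq : ‖p - q‖ ≤ ‖p‖ / 2)
    {t : ℝ} (ht : 0 < t) :
    ‖(t ^ (k + 1))⁻¹ • (f (t⁻¹ • p) - f (t⁻¹ • q))‖ ≤
      C * ‖p - q‖ / (t + ‖p‖ / 2) ^ (k + 2) := by
  have ht' : 0 ≤ t⁻¹ := inv_nonneg.2 ht.le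
  have hscaled : ‖t⁻¹ • p - t⁻¹ • q‖ ≤ ‖t⁻¹ • p‖ / 2 := by
    rw [← smul_sub, norm_smul_of_nonneg ht', norm_smul_of_nonneg ht', mul_div_assoc]
    gcongr
  have h := norm_sub_le_of_one_add_pow_mul_norm_fderiv_le hf hC hscaled
  rw [← smul_sub, norm_smul_of_nonneg ht', norm_smul_of_nonneg ht'] at h
  rw [norm_smul_of_nonneg (by positivity)]
  calc (t ^ (k + 1))⁻¹ * ‖f (t⁻¹ • p) - f (t⁻¹ • q)‖
      ≤ (t ^ (k + 1))⁻¹ * (C / (1 + t⁻¹ * ‖p‖ / 2) ^ (k + 2) * (t⁻¹ * ‖p - q‖)) := by gcongr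
    _ = C * ‖p - q‖ / (t + ‖p‖ / 2) ^ (k + 2) := by
      rw [show 1 + t⁻¹ * ‖p‖ / 2 = (t + ‖p‖ / 2) / t by field_simp, div_pow]
      field_simp
      ring

open SchwartzMap in
theorem varNorm_dilation_sub_le (Φ : 𝓢(E, F)) (k : ℕ) :
    ∃ C, 0 < C ∧ ∀ ρ : ℝ, 1 ≤ ρ → ∀ p q : E, p ≠ 0 → ‖p - q‖ ≤ ‖p‖ / 2 →
      varNorm ρ (Ioi (0 : ℝ)) (fun t => (t ^ k)⁻¹ • (Φ (t⁻¹ • p) - Φ (t⁻¹ • q))) ≤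
        ENNReal.ofReal (C * ‖p - q‖ / ‖p‖ ^ (k + 1)) := by
  obtain ⟨C, hC0, hC⟩ := (euler k Φ).exists_one_add_pow_mul_norm_fderiv_le (k + 2)
  refine ⟨2 ^ (k + 1) * C / (k + 1), by positivity, fun ρ hρ p q hp hpq => ?_⟩
  have hp' : 0 < ‖p‖ := norm_pos_iff.2 hp
  refine varNorm_le_of_norm_sub_le hρ
    (g := fun s => C * ‖p - q‖ / ((k + 1) * (s + ‖p‖ / 2) ^ (k + 1)))
    (fun s (hs : 0 < s) t _ hst => ?_) (fun s (hs : 0 < s) t (ht : 0 < t) _ => ?_)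
  · refine norm_sub_le_sub_of_norm_deriv_le hst
      (f := fun t => (t ^ k)⁻¹ • (Φ (t⁻¹ • p) - Φ (t⁻¹ • q)))
      (f' := fun x => -(x ^ (k + 1))⁻¹ • (euler k Φ (x⁻¹ • p) - euler k Φ (x⁻¹ • q)))
      (fun x hx => ?_) (fun x hx => hasDerivAt_div_mul_add_pow (C * ‖p - q‖) _ k ?_)
      (fun x hx => ?_)
    · have hx : x ≠ 0 := (hs.trans_le hx.1).ne'
      simpa only [smul_sub] using
        (hasDerivAt_dilation Φ k p hx).fun_sub (hasDerivAt_dilation Φ k q hx)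
    · exact (by linarith [hx.1] : 0 < x + ‖p‖ / 2).ne'
    · rw [neg_smul, norm_neg, neg_neg]
      exact norm_inv_pow_smul_sub_le (euler k Φ).differentiable hC hpq (hs.trans_le hx.1)
  · calc C * ‖p - q‖ / ((k + 1) * (s + ‖p‖ / 2) ^ (k + 1))
          - C * ‖p - q‖ / ((k + 1) * (t + ‖p‖ / 2) ^ (k + 1))
        ≤ C * ‖p - q‖ / ((k + 1) * (s + ‖p‖ / 2) ^ (k + 1)) := sub_le_self _ (by positivity)
      _ ≤ C * ‖p - q‖ / ((k + 1) * (‖p‖ / 2) ^ (k + 1)) := by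
        gcongr
        linarith
      _ = 2 ^ (k + 1) * C / (k + 1) * ‖p - q‖ / ‖p‖ ^ (k + 1) := by
        rw [div_pow]
        field_simp

end Dilation

/-- regularity bound for the ρ-variation of the dilated kernels
`φ_t(y,z) = t⁻² φ(y/t, z/t)` of a Schwartz function `φ ∈ S(ℝ²)`. -/
theorem varNorm_dilated_kernel_regularity (Φ : SchwartzMap (ℝ × ℝ) ℝ) :
    ∃ C : ℝ, 0 < C ∧ ∀ ρ : ℝ, 1 ≤ ρ → ∀ y y' z : ℝ, (y, z) ≠ ((0 : ℝ), (0 : ℝ)) →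
      |y - y'| ≤ max |y| |z| / 2 →
      varNorm ρ (Set.Ioi (0:ℝ))
          (fun t => (t ^ 2)⁻¹ * (Φ (y / t, z / t) - Φ (y' / t, z / t))) ≤
        ENNReal.ofReal (C * |y - y'| / (|y| + |z|) ^ 3) := by
  obtain ⟨C, hC0, hC⟩ := varNorm_dilation_sub_le Φ 2
  refine ⟨8 * C, by positivity, fun ρ hρ y y' z hyz hyy' => ?_⟩
  have hnorm : ‖((y, z) : ℝ × ℝ)‖ = max |y| |z| := rfl
  have hsub : ‖((y, z) : ℝ × ℝ) - (y', z)‖ = |y - y'| := by simp [Prod.norm_def]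
  have hfamily : (fun t : ℝ => (t ^ 2)⁻¹ * (Φ (y / t, z / t) - Φ (y' / t, z / t))) =
      fun t => (t ^ 2)⁻¹ • (Φ (t⁻¹ • (y, z)) - Φ (t⁻¹ • (y', z))) := by
    simp only [Prod.smul_mk, smul_eq_mul, div_eq_inv_mul]
  have hmax : 0 < max |y| |z| := hnorm ▸ norm_pos_iff.2 hyz
  have hr : 0 < |y| + |z| :=
    hmax.trans_le (max_le_add_of_nonneg (abs_nonneg y) (abs_nonneg z))
  rw [hfamily]
  refine (hC ρ hρ (y, z) (y', z) hyz (by rwa [hsub, hnorm])).trans (ENNReal.ofReal_le_ofReal ?_)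
  rw [hsub, hnorm]
  calc C * |y - y'| / max |y| |z| ^ 3 ≤ C * |y - y'| / ((|y| + |z|) / 2) ^ 3 := by
        gcongr
        linarith [le_max_left |y| |z|, le_max_right |y| |z|]
    _ = 8 * C * |y - y'| / (|y| + |z|) ^ 3 := by
        rw [div_pow]
        field_simp
        ring
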